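/- In Contract 2 with the buyer as leading contract player, the inducible set at the right buyer-owned node is {u⁴, u⁶}: for all real x, x', y, λ, γ with 0 < γ < 1, y > x > x' > 0, λ > 0 and γ·x < (1-γ)·λ, one has {u⁴, u⁶} ∪ threatenS({u⁴, u⁵, u⁶}, {u⁴, u⁶}) = {u⁴, u⁶}; in particular u⁵ cannot be threatened into the set. -/

import Mathlib

/-- Threats against the seller (the follower): compare the seller's coordinate. -/
def threatenS (A B : Set (ℝ × ℝ)) : Set (ℝ × ℝ) := {a ∈ A | ∃ b ∈ B, b.2 < a.2}

theorem threatenS_subset (A B : Set (ℝ × ℝ)) : threatenS A B ⊆ A := fun _ h => h.1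

theorem notMem_threatenS_of_forall_le {A B : Set (ℝ × ℝ)} {a : ℝ × ℝ}
    (h : ∀ b ∈ B, a.2 ≤ b.2) : a ∉ threatenS A B := by
  rintro ⟨-, b, hb, hlt⟩
  exact (h b hb).not_gt hlt

theorem union_threatenS_insert_eq {B : Set (ℝ × ℝ)} {c : ℝ × ℝ}
    (hc : ∀ b ∈ B, c.2 ≤ b.2) : B ∪ threatenS (insert c B) B = B := by
  refine Set.union_eq_self_of_subset_right fun a ha => ?_
  rcases threatenS_subset _ _ ha with rfl | hB
  · exact absurd ha (notMem_threatenS_of_forall_le hc)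
  · exact hB

theorem contract2_buyer_rightNode_general (x x' lam γ : ℝ)
    (hx'x : x' < x) (hx' : 0 < x')
    (hdep : γ * x < (1 - γ) * lam) :
    let u4 : ℝ × ℝ := (-x, x)
    let u5 : ℝ × ℝ := (-(x + lam) * γ, x * γ - lam * (1 - γ))
    let u6 : ℝ × ℝ := (0, 0)
    (({u4, u6} : Set (ℝ × ℝ)) ∪ threatenS {u4, u5, u6} {u4, u6} = {u4, u6}) ∧
    u5 ∉ ({u4, u6} : Set (ℝ × ℝ)) ∪ threatenS {u4, u5, u6} {u4, u6} := by
  intro u4 u5 u6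
  have hx : 0 < x := hx'.trans hx'x
  have hu5 : ∀ b ∈ ({u4, u6} : Set (ℝ × ℝ)), u5.2 < b.2 := by
    rintro b (rfl | rfl) <;> simp only [u4, u5, u6] <;> linarith
  have heq : ({u4, u6} : Set (ℝ × ℝ)) ∪ threatenS {u4, u5, u6} {u4, u6} = {u4, u6} := by
    rw [Set.insert_comm]
    exact union_threatenS_insert_eq fun b hb => (hu5 b hb).le
  refine ⟨heq, ?_⟩
  rw [heq]
  exact fun h => (hu5 u5 h).false

/-- In Contract 2 with the buyer as leading contract player, the
inducible set at the right buyer-owned node is {u⁴, u⁶}; in particular u⁵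
cannot be threatened into the set. -/
theorem contract2_buyer_rightNode (x x' y lam γ : ℝ)
    (hγ0 : 0 < γ) (hγ1 : γ < 1) (hxy : x < y) (hx'x : x' < x) (hx' : 0 < x')
    (hlam : 0 < lam) (hdep : γ * x < (1 - γ) * lam) :
    let u4 : ℝ × ℝ := (-x, x)
    let u5 : ℝ × ℝ := (-(x + lam) * γ, x * γ - lam * (1 - γ))
    let u6 : ℝ × ℝ := (0, 0)
    (({u4, u6} : Set (ℝ × ℝ)) ∪ threatenS {u4, u5, u6} {u4, u6} = {u4, u6}) ∧
    u5 ∉ ({u4, u6} : Set (ℝ × ℝ)) ∪ threatenS {u4, u5, u6} {u4, u6} :=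
  contract2_buyer_rightNode_general x x' lam γ hx'x hx' hdep
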